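/- Let $\Omega$ be a finite probability space with probability mass function $p$. Let $T,S : \Omega \to \{0,1\}$, $Y_0,Y_1 : \Omega \to \mathbb{R}$, and suppose $X : \Omega \to \mathcal{X}$ takes finitely many values. Assume: (i) conditional on each value $x$ of $X$, $(Y_0,Y_1,T)$ is independent of $S$; (ii) conditional on $X=x$ and $S=1$, $(Y_0,Y_1)$ is independent of $T$; (iii) for all $x$ with $\mathbb{P}(X=x)>0$, $\mathbb{P}(S=1\mid X=x) \in (0,1)$ and $\mathbb{P}(T=1 \mid X=x, S=1) \in (0,1)$. Let $Y = TY_1+(1-T)Y_0$, $e(x) = \mathbb{P}(T=1\mid X=x,S=1)$ and $\pi_S(x)=\mathbb{P}(S=1\mid X=x)$. Then $\mathbb{E}[Y_1 - Y_0] = \mathbb{E}\left[\frac{\mathbf{1}\{S=1\}}{\pi_S(X)}\left(\frac{TY}{e(X)} - \frac{(1-T)Y}{1-e(X)}\right)\right]$. -/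
import Mathlib


open scoped Classical
open Finset

noncomputable section

/-- Probability of an event under a pmf `p` on a finite type. -/
def prb {Ω : Type*} [Fintype Ω] (p : Ω → ℝ) (E : Ω → Prop) : ℝ :=
  ∑ ω, if E ω then p ω else 0

/-- Expectation of `f` under pmf `p`. -/
def expec {Ω : Type*} [Fintype Ω] (p : Ω → ℝ) (f : Ω → ℝ) : ℝ :=
  ∑ ω, p ω * f ω

/-- Conditional probability `P(E ∣ F)` under pmf `p`. -/
def cprb {Ω : Type*} [Fintype Ω] (p : Ω → ℝ) (E F : Ω → Prop) : ℝ :=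
  prb p (fun ω => E ω ∧ F ω) / prb p F

/-- Conditional expectation `E[f ∣ F]` under pmf `p`. -/
def cexpec {Ω : Type*} [Fintype Ω] (p : Ω → ℝ) (f : Ω → ℝ) (F : Ω → Prop) : ℝ :=
  (∑ ω, if F ω then p ω * f ω else 0) / prb p F

lemma prb_congr {Ω : Type*} [Fintype Ω] (p : Ω → ℝ) (E F : Ω → Prop)
    (h : ∀ ω, E ω ↔ F ω) : prb p E = prb p F := by
  unfold prb
  exact Finset.sum_congr rfl fun ω _ => by
    by_cases hE : E ω
    · rw [if_pos hE, if_pos ((h ω).mp hE)]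
    · rw [if_neg hE, if_neg (fun hF => hE ((h ω).mpr hF))]

lemma prb_split {Ω : Type*} [Fintype Ω] (p : Ω → ℝ) (E : Ω → Prop) (T : Ω → ℝ)
    (hT : ∀ ω, T ω = 0 ∨ T ω = 1) :
    prb p E = prb p (fun ω => E ω ∧ T ω = 0) + prb p (fun ω => E ω ∧ T ω = 1) := by
  unfold prb
  rw [← Finset.sum_add_distrib]
  refine Finset.sum_congr rfl fun ω _ => ?_
  rcases hT ω with h | h <;> by_cases hE : E ω <;> simp [h, hE]

lemma prb_nonneg {Ω : Type*} [Fintype Ω] (p : Ω → ℝ) (hp : ∀ ω, 0 ≤ p ω) (E : Ω → Prop) :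
    0 ≤ prb p E :=
  Finset.sum_nonneg fun ω _ => by by_cases h : E ω <;> simp [h, hp ω]

lemma key_sum {Ω 𝓧 : Type*} [Fintype Ω] (p : Ω → ℝ) (hp : ∀ ω, 0 ≤ p ω)
    (X : Ω → 𝓧) (Y0 Y1 : Ω → ℝ) (I : Ω → Prop) (κ : 𝓧 → ℝ) (w : ℝ → ℝ → ℝ)
    (hκ : ∀ x y0 y1, 0 < prb p (fun ω => X ω = x) →
      κ x ≠ 0 ∧
      prb p (fun ω => Y0 ω = y0 ∧ Y1 ω = y1 ∧ I ω ∧ X ω = x)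
        = κ x * prb p (fun ω => Y0 ω = y0 ∧ Y1 ω = y1 ∧ X ω = x)) :
    ∑ ω, p ω * w (Y0 ω) (Y1 ω)
      = ∑ ω, p ω * ((if I ω then (1:ℝ) else 0) * w (Y0 ω) (Y1 ω) / κ (X ω)) := by
  classical
  set g : Ω → 𝓧 × ℝ × ℝ := fun ω => (X ω, Y0 ω, Y1 ω) with hg
  have hmaps : ∀ ω ∈ (Finset.univ : Finset Ω), g ω ∈ Finset.univ.image g :=
    fun ω _ => Finset.mem_image_of_mem _ (Finset.mem_univ ω)
  rw [← Finset.sum_fiberwise_of_maps_to hmaps (fun ω => p ω * w (Y0 ω) (Y1 ω)),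
      ← Finset.sum_fiberwise_of_maps_to hmaps
        (fun ω => p ω * ((if I ω then (1:ℝ) else 0) * w (Y0 ω) (Y1 ω) / κ (X ω)))]
  refine Finset.sum_congr rfl fun c _ => ?_
  obtain ⟨x, y0, y1⟩ := c
  have hmem : ∀ ω, g ω = (x, y0, y1) ↔ (X ω = x ∧ Y0 ω = y0 ∧ Y1 ω = y1) := fun ω => by
    simp [hg, Prod.ext_iff]
  by_cases hPX : 0 < prb p (fun ω => X ω = x)
  · obtain ⟨hκ0, hcell⟩ := hκ x y0 y1 hPX
    have e1 : ∑ ω ∈ Finset.univ.filter (fun ω => g ω = (x, y0, y1)), p ω * w (Y0 ω) (Y1 ω)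
        = w y0 y1 * prb p (fun ω => Y0 ω = y0 ∧ Y1 ω = y1 ∧ X ω = x) := by
      unfold prb
      rw [Finset.sum_filter, Finset.mul_sum]
      refine Finset.sum_congr rfl fun ω _ => ?_
      by_cases h : g ω = (x, y0, y1)
      · obtain ⟨hx, h0, h1⟩ := (hmem ω).mp h
        have h' : Y0 ω = y0 ∧ Y1 ω = y1 ∧ X ω = x := ⟨h0, h1, hx⟩
        simp [h, h', h0, h1, mul_comm]
      · have h' : ¬(Y0 ω = y0 ∧ Y1 ω = y1 ∧ X ω = x) := by
          rw [hmem ω] at h; tauto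
        simp [h, h']
    have e2 : ∑ ω ∈ Finset.univ.filter (fun ω => g ω = (x, y0, y1)),
          p ω * ((if I ω then (1:ℝ) else 0) * w (Y0 ω) (Y1 ω) / κ (X ω))
        = w y0 y1 / κ x * prb p (fun ω => Y0 ω = y0 ∧ Y1 ω = y1 ∧ I ω ∧ X ω = x) := by
      unfold prb
      rw [Finset.sum_filter, Finset.mul_sum]
      refine Finset.sum_congr rfl fun ω _ => ?_
      by_cases h : g ω = (x, y0, y1)
      · obtain ⟨hx, h0, h1⟩ := (hmem ω).mp h
        by_cases hI : I ω
        · have h' : Y0 ω = y0 ∧ Y1 ω = y1 ∧ I ω ∧ X ω = x := ⟨h0, h1, hI, hx⟩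
          simp only [h, hx, h0, h1, hI, if_true, and_true, true_and, and_self,
            eq_self_iff_true, if_pos]
          ring
        · have h' : ¬(Y0 ω = y0 ∧ Y1 ω = y1 ∧ I ω ∧ X ω = x) := by tauto
          simp [h, h', hI]
      · have h' : ¬(Y0 ω = y0 ∧ Y1 ω = y1 ∧ I ω ∧ X ω = x) := by
          rw [hmem ω] at h; tauto
        simp [h, h']
    rw [e1, e2, hcell]
    field_simp
  · have hPX0 : prb p (fun ω => X ω = x) = 0 :=
      le_antisymm (not_lt.mp hPX) (prb_nonneg p hp _)
    have hp0 : ∀ ω, X ω = x → p ω = 0 := by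
      intro ω hω
      have h := (Finset.sum_eq_zero_iff_of_nonneg
        (fun i _ => by by_cases hi : X i = x <;> simp [hi, hp i])).mp hPX0 ω (Finset.mem_univ ω)
      simpa [hω] using h
    rw [Finset.sum_eq_zero, Finset.sum_eq_zero]
    · intro ω hω
      rw [hp0 ω ((hmem ω).mp (Finset.mem_filter.mp hω).2).1, zero_mul]
    · intro ω hω
      rw [hp0 ω ((hmem ω).mp (Finset.mem_filter.mp hω).2).1, zero_mul]

/-- IPW identification of the population ATE under survey sampling. -/
theorem ipw_survey_ate
    {Ω 𝓧 : Type*} [Fintype Ω] (p : Ω → ℝ)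
    (hp : ∀ ω, 0 ≤ p ω) (hp1 : ∑ ω, p ω = 1)
    (X : Ω → 𝓧) (S T Y0 Y1 Y : Ω → ℝ)
    (hS : ∀ ω, S ω = 0 ∨ S ω = 1) (hT : ∀ ω, T ω = 0 ∨ T ω = 1)
    (hY : ∀ ω, Y ω = T ω * Y1 ω + (1 - T ω) * Y0 ω)
    (e piS : 𝓧 → ℝ)
    (he : ∀ x, e x = cprb p (fun ω => T ω = 1) (fun ω => X ω = x ∧ S ω = 1))
    (hpiS : ∀ x, piS x = cprb p (fun ω => S ω = 1) (fun ω => X ω = x))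
    -- (i) sampling ignorability: (Y0,Y1,T) ⟂ S ∣ X
    (hA1 : ∀ (x : 𝓧) (y0 y1 t s : ℝ),
      prb p (fun ω => Y0 ω = y0 ∧ Y1 ω = y1 ∧ T ω = t ∧ S ω = s ∧ X ω = x)
          * prb p (fun ω => X ω = x)
        = prb p (fun ω => Y0 ω = y0 ∧ Y1 ω = y1 ∧ T ω = t ∧ X ω = x)
          * prb p (fun ω => S ω = s ∧ X ω = x))
    -- (ii) unconfoundedness within the sample: (Y0,Y1) ⟂ T ∣ (X, S = 1)
    (hA2 : ∀ (x : 𝓧) (y0 y1 t : ℝ),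
      prb p (fun ω => Y0 ω = y0 ∧ Y1 ω = y1 ∧ T ω = t ∧ X ω = x ∧ S ω = 1)
          * prb p (fun ω => X ω = x ∧ S ω = 1)
        = prb p (fun ω => Y0 ω = y0 ∧ Y1 ω = y1 ∧ X ω = x ∧ S ω = 1)
          * prb p (fun ω => T ω = t ∧ X ω = x ∧ S ω = 1))
    -- (iii) overlap
    (hA3 : ∀ x, 0 < prb p (fun ω => X ω = x) →
      0 < piS x ∧ piS x < 1 ∧ 0 < e x ∧ e x < 1) :
    expec p (fun ω => Y1 ω - Y0 ω)
      = expec p (fun ω => S ω / piS (X ω)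
          * (T ω * Y ω / e (X ω) - (1 - T ω) * Y ω / (1 - e (X ω)))) := by
  classical
  -- the per-cell probability identities
  have cells : ∀ x y0 y1, 0 < prb p (fun ω => X ω = x) →
      (prb p (fun ω => Y0 ω = y0 ∧ Y1 ω = y1 ∧ (S ω = 1 ∧ T ω = 1) ∧ X ω = x)
        = (piS x * e x) * prb p (fun ω => Y0 ω = y0 ∧ Y1 ω = y1 ∧ X ω = x))
      ∧ (prb p (fun ω => Y0 ω = y0 ∧ Y1 ω = y1 ∧ (S ω = 1 ∧ T ω = 0) ∧ X ω = x)
        = (piS x * (1 - e x)) * prb p (fun ω => Y0 ω = y0 ∧ Y1 ω = y1 ∧ X ω = x)) := by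
    intro x y0 y1 hPX
    obtain ⟨hπ0, hπ1, he0, he1⟩ := hA3 x hPX
    have hPXne : prb p (fun ω => X ω = x) ≠ 0 := ne_of_gt hPX
    have hPSX : prb p (fun ω => S ω = 1 ∧ X ω = x) = piS x * prb p (fun ω => X ω = x) := by
      rw [hpiS x]; unfold cprb; field_simp
    have hPXS : prb p (fun ω => X ω = x ∧ S ω = 1) = piS x * prb p (fun ω => X ω = x) := by
      rw [prb_congr p _ (fun ω => S ω = 1 ∧ X ω = x) (fun ω => and_comm), hPSX]
    have hPXSpos : 0 < prb p (fun ω => X ω = x ∧ S ω = 1) := by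
      rw [hPXS]; exact mul_pos hπ0 hPX
    have hPXSne : prb p (fun ω => X ω = x ∧ S ω = 1) ≠ 0 := ne_of_gt hPXSpos
    have hPTXS : prb p (fun ω => T ω = 1 ∧ X ω = x ∧ S ω = 1)
        = e x * prb p (fun ω => X ω = x ∧ S ω = 1) := by
      rw [he x]; unfold cprb; field_simp
    -- bS = piS x * b
    set bS := prb p (fun ω => Y0 ω = y0 ∧ Y1 ω = y1 ∧ S ω = 1 ∧ X ω = x) with hbSdef
    set b := prb p (fun ω => Y0 ω = y0 ∧ Y1 ω = y1 ∧ X ω = x) with hbdef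
    have hbS_split : bS
        = prb p (fun ω => Y0 ω = y0 ∧ Y1 ω = y1 ∧ T ω = 0 ∧ S ω = 1 ∧ X ω = x)
          + prb p (fun ω => Y0 ω = y0 ∧ Y1 ω = y1 ∧ T ω = 1 ∧ S ω = 1 ∧ X ω = x) := by
      rw [hbSdef, prb_split p _ T hT]
      congr 1 <;> exact prb_congr p _ _ (fun ω => by tauto)
    have hb_split : b
        = prb p (fun ω => Y0 ω = y0 ∧ Y1 ω = y1 ∧ T ω = 0 ∧ X ω = x)
          + prb p (fun ω => Y0 ω = y0 ∧ Y1 ω = y1 ∧ T ω = 1 ∧ X ω = x) := by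
      rw [hbdef, prb_split p _ T hT]
      congr 1 <;> exact prb_congr p _ _ (fun ω => by tauto)
    have hA1sum : bS * prb p (fun ω => X ω = x) = b * prb p (fun ω => S ω = 1 ∧ X ω = x) := by
      rw [hbS_split, hb_split, add_mul, add_mul, hA1 x y0 y1 0 1, hA1 x y0 y1 1 1]
    have hbS_eq : bS = piS x * b := by
      rw [hPSX] at hA1sum
      have h2 : bS * prb p (fun ω => X ω = x) = (piS x * b) * prb p (fun ω => X ω = x) := by
        rw [hA1sum]; ring
      exact mul_right_cancel₀ hPXne h2
    -- use hA2
    have hBS : prb p (fun ω => Y0 ω = y0 ∧ Y1 ω = y1 ∧ X ω = x ∧ S ω = 1) = bS :=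
      prb_congr p _ _ (fun ω => by tauto)
    have hA2_1 := hA2 x y0 y1 1
    rw [hBS, hPTXS] at hA2_1
    have hA1v : prb p (fun ω => Y0 ω = y0 ∧ Y1 ω = y1 ∧ T ω = 1 ∧ X ω = x ∧ S ω = 1)
        = e x * bS := by
      have h2 : prb p (fun ω => Y0 ω = y0 ∧ Y1 ω = y1 ∧ T ω = 1 ∧ X ω = x ∧ S ω = 1)
            * prb p (fun ω => X ω = x ∧ S ω = 1)
          = (e x * bS) * prb p (fun ω => X ω = x ∧ S ω = 1) := by
        rw [hA2_1]; ring
      exact mul_right_cancel₀ hPXSne h2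
    -- T = 0 case
    have hT0 : prb p (fun ω => T ω = 0 ∧ X ω = x ∧ S ω = 1)
        = (1 - e x) * prb p (fun ω => X ω = x ∧ S ω = 1) := by
      have hsp := prb_split p (fun ω => X ω = x ∧ S ω = 1) T hT
      have h0 : prb p (fun ω => (X ω = x ∧ S ω = 1) ∧ T ω = 0)
          = prb p (fun ω => T ω = 0 ∧ X ω = x ∧ S ω = 1) :=
        prb_congr p _ _ (fun ω => by tauto)
      have h1 : prb p (fun ω => (X ω = x ∧ S ω = 1) ∧ T ω = 1)
          = prb p (fun ω => T ω = 1 ∧ X ω = x ∧ S ω = 1) :=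
        prb_congr p _ _ (fun ω => by tauto)
      rw [h0, h1, hPTXS] at hsp
      linarith
    have hA2_0 := hA2 x y0 y1 0
    rw [hBS, hT0] at hA2_0
    have hA0v : prb p (fun ω => Y0 ω = y0 ∧ Y1 ω = y1 ∧ T ω = 0 ∧ X ω = x ∧ S ω = 1)
        = (1 - e x) * bS := by
      have h2 : prb p (fun ω => Y0 ω = y0 ∧ Y1 ω = y1 ∧ T ω = 0 ∧ X ω = x ∧ S ω = 1)
            * prb p (fun ω => X ω = x ∧ S ω = 1)
          = ((1 - e x) * bS) * prb p (fun ω => X ω = x ∧ S ω = 1) := by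
        rw [hA2_0]; ring
      exact mul_right_cancel₀ hPXSne h2
    constructor
    · rw [prb_congr p _ (fun ω => Y0 ω = y0 ∧ Y1 ω = y1 ∧ T ω = 1 ∧ X ω = x ∧ S ω = 1)
        (fun ω => by tauto), hA1v, hbS_eq]
      ring
    · rw [prb_congr p _ (fun ω => Y0 ω = y0 ∧ Y1 ω = y1 ∧ T ω = 0 ∧ X ω = x ∧ S ω = 1)
        (fun ω => by tauto), hA0v, hbS_eq]
      ring
  have keyA := key_sum p hp X Y0 Y1 (fun ω => S ω = 1 ∧ T ω = 1)
    (fun x => piS x * e x) (fun _ b => b)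
    (fun x y0 y1 hPX => by
      obtain ⟨hπ0, hπ1, he0, he1⟩ := hA3 x hPX
      exact ⟨ne_of_gt (mul_pos hπ0 he0), (cells x y0 y1 hPX).1⟩)
  have keyB := key_sum p hp X Y0 Y1 (fun ω => S ω = 1 ∧ T ω = 0)
    (fun x => piS x * (1 - e x)) (fun a _ => a)
    (fun x y0 y1 hPX => by
      obtain ⟨hπ0, hπ1, he0, he1⟩ := hA3 x hPX
      exact ⟨ne_of_gt (mul_pos hπ0 (by linarith)), (cells x y0 y1 hPX).2⟩)
  unfold expec
  have hL : ∑ ω, p ω * (Y1 ω - Y0 ω) = (∑ ω, p ω * Y1 ω) - ∑ ω, p ω * Y0 ω := by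
    rw [← Finset.sum_sub_distrib]
    exact Finset.sum_congr rfl fun ω _ => by ring
  rw [hL, keyA, keyB, ← Finset.sum_sub_distrib]
  refine Finset.sum_congr rfl fun ω _ => ?_
  beta_reduce
  have hy := hY ω
  rcases hS ω with hs | hs <;> rcases hT ω with ht | ht <;> rw [hy, hs, ht]
  · rw [if_neg (show ¬((0:ℝ) = 1 ∧ (0:ℝ) = 1) by norm_num),
        if_neg (show ¬((0:ℝ) = 1 ∧ (0:ℝ) = 0) by norm_num)]
    ring
  · rw [if_neg (show ¬((0:ℝ) = 1 ∧ (1:ℝ) = 1) by norm_num),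
        if_neg (show ¬((0:ℝ) = 1 ∧ (1:ℝ) = 0) by norm_num)]
    ring
  · rw [if_neg (show ¬((1:ℝ) = 1 ∧ (0:ℝ) = 1) by norm_num),
        if_pos (show ((1:ℝ) = 1 ∧ (0:ℝ) = 0) by norm_num)]
    simp only [div_eq_mul_inv, mul_inv]
    ring
  · rw [if_pos (show ((1:ℝ) = 1 ∧ (1:ℝ) = 1) by norm_num),
        if_neg (show ¬((1:ℝ) = 1 ∧ (1:ℝ) = 0) by norm_num)]
    simp only [div_eq_mul_inv, mul_inv]
    ring
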